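/- Let (S_n) be a centered random walk with i.i.d. increments, 0 < E(S_1²) < ∞, and E(e^{a S_1}) < ∞ for all 0 ≤ a < δ, some δ > 0. Let H_b = inf{ i ≥ 0 : S_i ≥ b } and ΔS_{H_b} = S_{H_b} − S_{H_b − 1} (the jump at the first passage over b). Then there exists a constant c > 0 such that sup_{b>0} E[ exp(c · ΔS_{H_b}) ] < ∞. -/

import Mathlib

open MeasureTheory ProbabilityTheory

/-- The random walk with increments `ξ`: `S n = ξ 0 + ⋯ + ξ (n-1)`, `S 0 = 0`. -/
noncomputable def walk {Ω : Type*} (ξ : ℕ → Ω → ℝ) (n : ℕ) (ω : Ω) : ℝ :=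
  ∑ i ∈ Finset.range n, ξ i ω

/-- First passage time `inf {i ≥ 0 : S i ≥ b}`, with value `⊤` if there is none. -/
noncomputable def hitAbove₀ {Ω : Type*} (S : ℕ → Ω → ℝ) (b : ℝ) (ω : Ω) : ℕ∞ :=
  sInf ((fun i : ℕ => (i : ℕ∞)) '' {i : ℕ | b ≤ S i ω})

/-!
Let `X n` be the gap `b - S n` between the level and the walk, frozen at `0` once the level has
been crossed: a Markov chain driven by the increments. Put `η = δ / 3`; since `ξ` is centred and
non-degenerate, `φ = E e^{η ξ} > 1`. For suitable `A, B > 0` the function `V t = A - B e^{-η t}`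
(`t > 0`) satisfies `E[V (t - ξ); ξ < t] + e^{-η t} ≤ V t`, so summing along the chain bounds the
Green function `∑ₙ E[e^{-η X n}; X n > 0]` by `A`, whatever `b` is. The jump crossing the level at
time `n + 1` is at least `X n`, so there `e^{η ξ n} ≤ e^{-η X n} e^{2 η ξ n}`; as `X n` is
independent of `ξ n`, the exponential moment of the overshoot jump is at most `1 + A E e^{2 η ξ}`.
-/

open Real
open scoped ENNReal

noncomputable def drivenChain {Ω α β : Type*} (f : β → α → β) (x₀ : β) (ξ : ℕ → Ω → α) :
    ℕ → Ω → β
  | 0 => fun _ => x₀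
  | n + 1 => fun ω => f (drivenChain f x₀ ξ n ω) (ξ n ω)

section DrivenChain

variable {Ω α β : Type*} {mΩ : MeasurableSpace Ω} [mα : MeasurableSpace α] [MeasurableSpace β]
  {μ : Measure Ω} {f : β → α → β} {x₀ : β} {ξ : ℕ → Ω → α}

theorem measurable_drivenChain_past (hf : Measurable (Function.uncurry f)) (n : ℕ) :
    Measurable[⨆ i ∈ Set.Iio n, mα.comap (ξ i)] (drivenChain f x₀ ξ n) := by
  induction n with
  | zero => exact measurable_const
  | succ n ih =>
    have hpast : (⨆ i ∈ Set.Iio n, mα.comap (ξ i)) ≤ ⨆ i ∈ Set.Iio (n + 1), mα.comap (ξ i) :=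
      biSup_mono fun i hi => lt_trans hi n.lt_succ_self
    have hnow : mα.comap (ξ n) ≤ ⨆ i ∈ Set.Iio (n + 1), mα.comap (ξ i) :=
      le_biSup (fun i => mα.comap (ξ i)) n.lt_succ_self
    exact hf.comp ((ih.mono hpast le_rfl).prodMk ((comap_measurable (ξ n)).mono hnow le_rfl))

theorem measurable_drivenChain (hf : Measurable (Function.uncurry f))
    (hξ : ∀ i, Measurable (ξ i)) (n : ℕ) : Measurable (drivenChain f x₀ ξ n) :=
  (measurable_drivenChain_past hf n).mono (iSup₂_le fun i _ => (hξ i).comap_le) le_rfl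

theorem indepFun_drivenChain (hf : Measurable (Function.uncurry f))
    (hξ : ∀ i, Measurable (ξ i)) (hindep : iIndepFun ξ μ) (n : ℕ) :
    IndepFun (drivenChain f x₀ ξ n) (ξ n) μ := by
  rw [IndepFun_iff_Indep]
  have h := indep_iSup_of_disjoint (fun i => (hξ i).comap_le)
    ((iIndepFun_iff_iIndep _ _ _).1 hindep) (S := Set.Iio n) (T := {n}) (by simp)
  refine indep_of_indep_of_le_right (indep_of_indep_of_le_left h ?_) ?_
  · exact (measurable_drivenChain_past hf n).comap_le
  · exact le_biSup (fun i => mα.comap (ξ i)) (Set.mem_singleton n)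

theorem ProbabilityTheory.IndepFun.lintegral_comp_eq_lintegral_lintegral [IsFiniteMeasure μ]
    {Y : Ω → β} {Z : Ω → α} (hYZ : IndepFun Y Z μ) (hY : Measurable Y) (hZ : Measurable Z)
    {Φ : β × α → ℝ≥0∞} (hΦ : Measurable Φ) :
    ∫⁻ ω, Φ (Y ω, Z ω) ∂μ = ∫⁻ ω, ∫⁻ ω', Φ (Y ω, Z ω') ∂μ ∂μ := by
  calc ∫⁻ ω, Φ (Y ω, Z ω) ∂μ = ∫⁻ z, Φ z ∂((μ.map Y).prod (μ.map Z)) := by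
        rw [← hYZ.map_prod_eq_prod_map_map hY.aemeasurable hZ.aemeasurable,
          lintegral_map hΦ (hY.prodMk hZ)]
    _ = ∫⁻ y, ∫⁻ x, Φ (y, x) ∂(μ.map Z) ∂(μ.map Y) := lintegral_prod _ hΦ.aemeasurable
    _ = ∫⁻ ω, ∫⁻ ω', Φ (Y ω, Z ω') ∂μ ∂μ := by
        rw [lintegral_map hΦ.lintegral_prod_right' hY]
        exact lintegral_congr fun ω => lintegral_map (hΦ.comp measurable_prodMk_left) hZ

theorem lintegral_drivenChain_succ_add_le [IsProbabilityMeasure μ]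
    (hf : Measurable (Function.uncurry f)) (hξ : ∀ i, Measurable (ξ i)) (hindep : iIndepFun ξ μ)
    (hident : ∀ i, IdentDistrib (ξ i) (ξ 0) μ μ) {V w : β → ℝ≥0∞} (hV : Measurable V)
    (hw : Measurable w) (hVw : ∀ x, ∫⁻ ω, V (f x (ξ 0 ω)) ∂μ + w x ≤ V x) (n : ℕ) :
    ∫⁻ ω, V (drivenChain f x₀ ξ (n + 1) ω) ∂μ + ∫⁻ ω, w (drivenChain f x₀ ξ n ω) ∂μ
      ≤ ∫⁻ ω, V (drivenChain f x₀ ξ n ω) ∂μ := by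
  have hX := measurable_drivenChain (x₀ := x₀) hf hξ n
  have hnext : ∫⁻ ω, V (drivenChain f x₀ ξ (n + 1) ω) ∂μ
      = ∫⁻ ω, ∫⁻ ω', V (f (drivenChain f x₀ ξ n ω) (ξ 0 ω')) ∂μ ∂μ := by
    rw [show ∫⁻ ω, V (drivenChain f x₀ ξ (n + 1) ω) ∂μ
        = ∫⁻ ω, (V ∘ Function.uncurry f) (drivenChain f x₀ ξ n ω, ξ n ω) ∂μ from rfl,
      (indepFun_drivenChain hf hξ hindep n).lintegral_comp_eq_lintegral_lintegral hX (hξ n)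
        (hV.comp hf)]
    exact lintegral_congr fun ω =>
      ((hident n).comp (hV.comp (hf.comp measurable_prodMk_left))).lintegral_eq
  rw [hnext, ← lintegral_add_right _ (g := fun ω => w (drivenChain f x₀ ξ n ω)) (hw.comp hX)]
  exact lintegral_mono fun ω => hVw _

theorem tsum_lintegral_drivenChain_le [IsProbabilityMeasure μ]
    (hf : Measurable (Function.uncurry f)) (hξ : ∀ i, Measurable (ξ i)) (hindep : iIndepFun ξ μ)
    (hident : ∀ i, IdentDistrib (ξ i) (ξ 0) μ μ) {V w : β → ℝ≥0∞} (hV : Measurable V)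
    (hw : Measurable w) (hVw : ∀ x, ∫⁻ ω, V (f x (ξ 0 ω)) ∂μ + w x ≤ V x) :
    ∑' n, ∫⁻ ω, w (drivenChain f x₀ ξ n ω) ∂μ ≤ V x₀ := by
  have htelescope : ∀ N, ∑ n ∈ Finset.range N, ∫⁻ ω, w (drivenChain f x₀ ξ n ω) ∂μ
      + ∫⁻ ω, V (drivenChain f x₀ ξ N ω) ∂μ ≤ V x₀ := by
    intro N
    induction N with
    | zero => simp [drivenChain]
    | succ N ih =>
      rw [Finset.sum_range_succ, add_assoc, add_comm (∫⁻ ω, w _ ∂μ)]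
      refine le_trans ?_ ih
      gcongr
      exact lintegral_drivenChain_succ_add_le hf hξ hindep hident hV hw hVw N
  exact ENNReal.tsum_le_of_sum_range_le fun N => le_self_add.trans (htelescope N)

theorem lintegral_drivenChain_mul_noise (hf : Measurable (Function.uncurry f))
    (hξ : ∀ i, Measurable (ξ i)) (hindep : iIndepFun ξ μ)
    (hident : ∀ i, IdentDistrib (ξ i) (ξ 0) μ μ) {u : β → ℝ≥0∞} {v : α → ℝ≥0∞}
    (hu : Measurable u) (hv : Measurable v) (n : ℕ) :
    ∫⁻ ω, u (drivenChain f x₀ ξ n ω) * v (ξ n ω) ∂μ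
      = (∫⁻ ω, u (drivenChain f x₀ ξ n ω) ∂μ) * ∫⁻ ω, v (ξ 0 ω) ∂μ := by
  rw [show ∫⁻ ω, v (ξ 0 ω) ∂μ = ∫⁻ ω, v (ξ n ω) ∂μ from
    ((hident n).comp hv).lintegral_eq.symm]
  exact lintegral_mul_eq_lintegral_mul_lintegral_of_indepFun
    (hu.comp (measurable_drivenChain hf hξ n)) (hv.comp (hξ n))
    ((indepFun_drivenChain hf hξ hindep n).comp hu hv)

end DrivenChain

-- A positive gap means the level has not been reached yet; `0` is the absorbing state.
noncomputable def gapStep (t x : ℝ) : ℝ := if 0 < t ∧ x < t then t - x else 0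

noncomputable def gapWeight (η t : ℝ) : ℝ≥0∞ :=
  if 0 < t then ENNReal.ofReal (exp (-η * t)) else 0

noncomputable def gapLyapunov (A B η t : ℝ) : ℝ≥0∞ :=
  if 0 < t then ENNReal.ofReal (A - B * exp (-η * t)) else 0

theorem measurable_gapStep : Measurable (Function.uncurry gapStep) :=
  Measurable.ite ((measurableSet_lt measurable_const measurable_fst).inter
    (measurableSet_lt measurable_snd measurable_fst)) (by fun_prop) measurable_const

theorem measurable_gapWeight (η : ℝ) : Measurable (gapWeight η) :=
  Measurable.ite measurableSet_Ioi (by fun_prop) measurable_const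

theorem measurable_gapLyapunov (A B η : ℝ) : Measurable (gapLyapunov A B η) :=
  Measurable.ite measurableSet_Ioi (by fun_prop) measurable_const

theorem gapLyapunov_le {A B : ℝ} (hB : 0 ≤ B) (η t : ℝ) :
    gapLyapunov A B η t ≤ ENNReal.ofReal A := by
  unfold gapLyapunov
  split_ifs
  · exact ENNReal.ofReal_le_ofReal (by nlinarith [exp_pos (-η * t)])
  · exact zero_le

section ExpMoments

variable {Ω : Type*} {mΩ : MeasurableSpace Ω} {μ : Measure Ω} [IsProbabilityMeasure μ]

theorem one_lt_integral_exp_mul {X : Ω → ℝ} (hX : Integrable X μ) (hmean : ∫ ω, X ω ∂μ = 0)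
    (hX0 : ¬ X =ᵐ[μ] 0) {a : ℝ} (ha : a ≠ 0) (hexp : Integrable (fun ω => exp (a * X ω)) μ) :
    1 < ∫ ω, exp (a * X ω) ∂μ := by
  set g := fun ω => exp (a * X ω) - 1 - a * X ω
  have hg_nonneg : 0 ≤ g := fun ω => by
    simp only [g, Pi.zero_apply]; linarith [add_one_le_exp (a * X ω)]
  have hg_int : Integrable g μ := (hexp.sub (integrable_const 1)).sub (hX.const_mul a)
  have hg_integral : ∫ ω, g ω ∂μ = ∫ ω, exp (a * X ω) ∂μ - 1 := by
    rw [integral_sub (f := fun ω => exp (a * X ω) - 1) (hexp.sub (integrable_const 1))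
      (hX.const_mul a), integral_sub hexp (integrable_const 1), integral_const_mul, hmean]
    simp
  by_contra! hle
  have hg0 : g =ᵐ[μ] 0 :=
    (integral_eq_zero_iff_of_nonneg hg_nonneg hg_int).1
      (le_antisymm (by linarith) (integral_nonneg hg_nonneg))
  refine hX0 (hg0.mono fun ω hω => ?_)
  by_contra hXω
  have := add_one_lt_exp (mul_ne_zero ha hXω)
  simp only [g, Pi.zero_apply] at hω
  linarith

theorem lintegral_gapLyapunov_gapStep_add_gapWeight_le {X : Ω → ℝ} {η A B : ℝ} (hη : 0 ≤ η)
    (hexp : Integrable (fun ω => exp (η * X ω)) μ)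
    (hexp2 : Integrable (fun ω => exp (2 * η * X ω)) μ)
    (hB : 2 ≤ B * (∫ ω, exp (η * X ω) ∂μ - 1))
    (hAB : B ^ 2 * ∫ ω, exp (2 * η * X ω) ∂μ ≤ 4 * A) (t : ℝ) :
    ∫⁻ ω, gapLyapunov A B η (gapStep t (X ω)) ∂μ + gapWeight η t ≤ gapLyapunov A B η t := by
  rcases le_or_gt t 0 with ht | ht
  · simp [gapLyapunov, gapStep, gapWeight, not_lt.2 ht]
  set u := exp (-η * t)
  set φ := ∫ ω, exp (η * X ω) ∂μ
  set φ₂ := ∫ ω, exp (2 * η * X ω) ∂μ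
  have hu_pos : 0 < u := exp_pos _
  have hu_le : u ≤ 1 := exp_le_one_iff.2 (by nlinarith)
  have hφ₂ : 0 < φ₂ := integral_exp_pos hexp2
  -- A majorant of the integrand: its last term makes it nonnegative (by `hAB`) while adding
  -- only `u` to its integral.
  set h := fun ω => A - B * u * exp (η * X ω) + u * exp (2 * η * X ω) / φ₂
  have h_nonneg : ∀ ω, 0 ≤ h ω := by
    intro ω
    set y := exp (η * X ω)
    have hsq : exp (2 * η * X ω) = y ^ 2 := by rw [← exp_nat_mul]; ring_nf
    have hquad : 0 ≤ A * φ₂ - B * φ₂ * (u * y) + u * y ^ 2 := by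
      have hu_sq : u ^ 2 * y ^ 2 ≤ u * y ^ 2 := by gcongr; nlinarith
      nlinarith [sq_nonneg (2 * (u * y) - B * φ₂), mul_le_mul_of_nonneg_right hAB hφ₂.le]
    have : h ω = (A * φ₂ - B * φ₂ * (u * y) + u * y ^ 2) / φ₂ := by
      simp only [h, hsq]; field_simp; ring
    rw [this]
    positivity
  have h_int : Integrable h μ :=
    ((integrable_const A).sub (hexp.const_mul (B * u))).add ((hexp2.const_mul u).div_const φ₂)
  have h_integral : ∫ ω, h ω ∂μ = A - B * u * φ + u := by
    rw [integral_add (f := fun ω => A - B * u * exp (η * X ω))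
        ((integrable_const A).sub (hexp.const_mul (B * u))) ((hexp2.const_mul u).div_const φ₂),
      integral_sub (integrable_const A) (hexp.const_mul (B * u)), integral_div,
      integral_const_mul, integral_const_mul]
    change ∫ _, A ∂μ - B * u * φ + u * φ₂ / φ₂ = _
    rw [integral_const, probReal_univ, smul_eq_mul, one_mul, mul_div_assoc, div_self hφ₂.ne',
      mul_one]
  have hpoint : ∀ ω, gapLyapunov A B η (gapStep t (X ω)) ≤ ENNReal.ofReal (h ω) := by
    intro ω
    by_cases hlt : X ω < t
    · rw [gapStep, if_pos ⟨ht, hlt⟩, gapLyapunov, if_pos (sub_pos.2 hlt)]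
      refine ENNReal.ofReal_le_ofReal ?_
      have : exp (-η * (t - X ω)) = u * exp (η * X ω) := by rw [← exp_add]; ring_nf
      rw [this]
      linarith [show 0 ≤ u * exp (2 * η * X ω) / φ₂ by positivity]
    · simp [gapStep, gapLyapunov, hlt]
  calc ∫⁻ ω, gapLyapunov A B η (gapStep t (X ω)) ∂μ + gapWeight η t
      ≤ ENNReal.ofReal (∫ ω, h ω ∂μ) + ENNReal.ofReal u := by
        rw [ofReal_integral_eq_lintegral_ofReal h_int (Filter.Eventually.of_forall h_nonneg)]
        simp only [gapWeight, if_pos ht, u]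
        gcongr
        exact hpoint _
    _ ≤ gapLyapunov A B η t := by
        have h_integral_nonneg := integral_nonneg (μ := μ) (f := h) h_nonneg
        rw [h_integral] at h_integral_nonneg
        rw [h_integral, ← ENNReal.ofReal_add h_integral_nonneg hu_pos.le, gapLyapunov, if_pos ht]
        exact ENNReal.ofReal_le_ofReal (by nlinarith)

end ExpMoments

section Walk

variable {Ω : Type*} {ξ : ℕ → Ω → ℝ} {b : ℝ} {ω : Ω}

theorem walk_zero : walk ξ 0 ω = 0 := Finset.sum_range_zero _

theorem walk_succ (n : ℕ) : walk ξ (n + 1) ω = walk ξ n ω + ξ n ω := Finset.sum_range_succ _ _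

theorem hitAbove₀_eq_of_lt_of_le {S : ℕ → Ω → ℝ} {k : ℕ} (hlt : ∀ i < k, S i ω < b)
    (hk : b ≤ S k ω) : hitAbove₀ S b ω = k :=
  le_antisymm (sInf_le ⟨k, hk, rfl⟩) <| le_sInf <| by
    rintro _ ⟨i, hi, rfl⟩
    show (k : ℕ∞) ≤ i
    exact_mod_cast not_lt.1 fun hik => (hlt i hik).not_ge hi

theorem hitAbove₀_eq_top {S : ℕ → Ω → ℝ} (h : ∀ i, S i ω < b) : hitAbove₀ S b ω = ⊤ := by
  simp [hitAbove₀, h]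

theorem drivenChain_gapStep_eq (hb : 0 < b) (n : ℕ) :
    drivenChain gapStep b ξ n ω = if ∀ i ≤ n, walk ξ i ω < b then b - walk ξ n ω else 0 := by
  induction n with
  | zero => simp [drivenChain, walk_zero, hb]
  | succ n ih =>
    change gapStep (drivenChain gapStep b ξ n ω) (ξ n ω) = _
    rw [ih]
    by_cases hP : ∀ i ≤ n, walk ξ i ω < b
    · have hiff : (∀ i ≤ n + 1, walk ξ i ω < b) ↔ ξ n ω < b - walk ξ n ω := by
        refine ⟨fun h => by linarith [walk_succ (ξ := ξ) (ω := ω) n, h (n + 1) le_rfl],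
          fun h i hi => (Nat.le_succ_iff.1 hi).elim (hP i) ?_⟩
        rintro rfl
        linarith [walk_succ (ξ := ξ) (ω := ω) n]
      simp only [if_pos hP, gapStep, hiff, sub_pos.2 (hP n le_rfl), true_and, walk_succ,
        sub_add_eq_sub_sub]
    · rw [if_neg hP, if_neg fun h => hP fun i hi => h i (hi.trans n.le_succ)]
      simp [gapStep]

theorem ofReal_exp_mul_jump_le {η c a : ℝ} (hb : 0 < b) (hη : 0 ≤ η) (hca : c + η ≤ a) :
    ENNReal.ofReal (exp (c * (walk ξ (hitAbove₀ (walk ξ) b ω).toNat ω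
        - walk ξ ((hitAbove₀ (walk ξ) b ω).toNat - 1) ω)))
      ≤ 1 + ∑' n, gapWeight η (drivenChain gapStep b ξ n ω)
          * ENNReal.ofReal (exp (a * ξ n ω)) := by
  classical
  by_cases hcross : ∃ k, b ≤ walk ξ k ω
  · obtain ⟨n, hn⟩ : ∃ n, Nat.find hcross = n + 1 :=
      Nat.exists_eq_succ_of_ne_zero fun h0 => by
        have := Nat.find_spec hcross
        rw [h0, walk_zero] at this
        linarith
    have hbelow : ∀ i ≤ n, walk ξ i ω < b := fun i hi =>
      not_le.1 (Nat.find_min hcross (by omega))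
    have hcrossed : b ≤ walk ξ (n + 1) ω := hn ▸ Nat.find_spec hcross
    rw [hitAbove₀_eq_of_lt_of_le (fun i hi => hbelow i (by omega)) hcrossed, ENat.toNat_natCast,
      Nat.add_sub_cancel, walk_succ, add_sub_cancel_left]
    refine le_add_left (le_trans ?_ (ENNReal.le_tsum n))
    have hgap : 0 < b - walk ξ n ω := sub_pos.2 (hbelow n le_rfl)
    have hjump : b - walk ξ n ω ≤ ξ n ω := by linarith [walk_succ (ξ := ξ) (ω := ω) n]
    rw [drivenChain_gapStep_eq hb, if_pos hbelow, gapWeight, if_pos hgap,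
      ← ENNReal.ofReal_mul (exp_pos _).le, ← exp_add]
    exact ENNReal.ofReal_le_ofReal (exp_le_exp.2 (by nlinarith))
  · push Not at hcross
    simp [hitAbove₀_eq_top hcross]

theorem lintegral_ofReal_exp_mul_jump_le {mΩ : MeasurableSpace Ω} {μ : Measure Ω}
    [IsProbabilityMeasure μ] (hmeas : ∀ i, Measurable (ξ i)) (hindep : iIndepFun ξ μ)
    (hident : ∀ i, IdentDistrib (ξ i) (ξ 0) μ μ) {η c a : ℝ} (hb : 0 < b) (hη : 0 ≤ η)
    (hca : c + η ≤ a) :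
    ∫⁻ ω, ENNReal.ofReal (exp (c * (walk ξ (hitAbove₀ (walk ξ) b ω).toNat ω
        - walk ξ ((hitAbove₀ (walk ξ) b ω).toNat - 1) ω))) ∂μ
      ≤ 1 + (∑' n, ∫⁻ ω, gapWeight η (drivenChain gapStep b ξ n ω) ∂μ)
          * ∫⁻ ω, ENNReal.ofReal (exp (a * ξ 0 ω)) ∂μ := by
  have hexp_meas : Measurable fun x => ENNReal.ofReal (exp (a * x)) := by fun_prop
  have hterm_meas : ∀ n, Measurable fun ω =>
      gapWeight η (drivenChain gapStep b ξ n ω) * ENNReal.ofReal (exp (a * ξ n ω)) := fun n =>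
    ((measurable_gapWeight η).comp (measurable_drivenChain measurable_gapStep hmeas n)).mul
      (hexp_meas.comp (hmeas n))
  calc _ ≤ ∫⁻ ω, 1 + ∑' n, gapWeight η (drivenChain gapStep b ξ n ω)
          * ENNReal.ofReal (exp (a * ξ n ω)) ∂μ :=
        lintegral_mono fun ω => ofReal_exp_mul_jump_le hb hη hca
    _ = _ := by
        rw [lintegral_add_left measurable_const, lintegral_const, measure_univ, mul_one,
          lintegral_tsum fun n => (hterm_meas n).aemeasurable, ← ENNReal.tsum_mul_right]
        exact congrArg _ (tsum_congr fun n => lintegral_drivenChain_mul_noise measurable_gapStep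
          hmeas hindep hident (measurable_gapWeight η) hexp_meas n)

end Walk

/-- Uniform exponential moment for the overshoot jump: for a centered random walk
with finite positive variance and `E(e^{a S₁}) < ∞` for all `0 ≤ a < δ`, there is
`c > 0` with `sup_{b>0} E[exp(c ΔS_{H_b})] < ∞`, where
`ΔS_{H_b} = S_{H_b} − S_{H_b − 1}`. -/
theorem overshoot_jump_exponential_moment {Ω : Type*} [MeasurableSpace Ω]
    (μ : Measure Ω) [IsProbabilityMeasure μ] (ξ : ℕ → Ω → ℝ) (δ : ℝ) (hδ : 0 < δ)
    (hmeas : ∀ i, Measurable (ξ i))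
    (hindep : iIndepFun ξ μ)
    (hident : ∀ i, IdentDistrib (ξ i) (ξ 0) μ μ)
    (hmean : ∫ ω, ξ 0 ω ∂μ = 0)
    (hsq_int : Integrable (fun ω => (ξ 0 ω) ^ 2) μ)
    (hsq_pos : 0 < ∫ ω, (ξ 0 ω) ^ 2 ∂μ)
    (hexp : ∀ a : ℝ, 0 ≤ a → a < δ →
      Integrable (fun ω => Real.exp (a * ξ 0 ω)) μ) :
    ∃ c > (0 : ℝ), ∃ C : ℝ, ∀ b : ℝ, 0 < b →
      (∫⁻ ω, ENNReal.ofReal (Real.exp (c *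
          (walk ξ (hitAbove₀ (walk ξ) b ω).toNat ω
            - walk ξ ((hitAbove₀ (walk ξ) b ω).toNat - 1) ω))) ∂μ)
        ≤ ENNReal.ofReal C := by
  set η := δ / 3 with hη_def
  have hη : 0 < η := by positivity
  have hexp₁ := hexp η hη.le (by linarith [hη_def])
  have hexp₂ := hexp (2 * η) (by positivity) (by linarith [hη_def])
  have hξ_int : Integrable (ξ 0) μ :=
    ((memLp_two_iff_integrable_sq (hmeas 0).aestronglyMeasurable).2 hsq_int).integrable one_le_two
  have hξ_ne : ¬ ξ 0 =ᵐ[μ] 0 := fun h =>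
    hsq_pos.ne' (integral_eq_zero_of_ae (h.mono fun ω hω => by simp [hω]))
  have hφ := one_lt_integral_exp_mul hξ_int hmean hξ_ne hη.ne' hexp₁
  set φ₂ := ∫ ω, exp (2 * η * ξ 0 ω) ∂μ
  set B := 2 / (∫ ω, exp (η * ξ 0 ω) ∂μ - 1)
  have hB : 0 < B := div_pos two_pos (sub_pos.2 hφ)
  set A := B ^ 2 * φ₂ / 4
  have hφ₂ : 0 ≤ φ₂ := integral_nonneg fun ω => (exp_pos _).le
  refine ⟨η, hη, 1 + A * φ₂, fun b hb => ?_⟩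
  have hgreen : ∑' n, ∫⁻ ω, gapWeight η (drivenChain gapStep b ξ n ω) ∂μ ≤ ENNReal.ofReal A :=
    (tsum_lintegral_drivenChain_le measurable_gapStep hmeas hindep hident
      (measurable_gapLyapunov A B η) (measurable_gapWeight η)
      (lintegral_gapLyapunov_gapStep_add_gapWeight_le hη.le hexp₁ hexp₂
        (div_mul_cancel₀ _ (sub_pos.2 hφ).ne').ge (by simp only [A]; linarith))).trans
      (gapLyapunov_le hB.le η b)
  have hmoment : ∫⁻ ω, ENNReal.ofReal (exp (2 * η * ξ 0 ω)) ∂μ = ENNReal.ofReal φ₂ :=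
    (ofReal_integral_eq_lintegral_ofReal hexp₂ (ae_of_all _ fun ω => (exp_pos _).le)).symm
  calc _ ≤ _ := lintegral_ofReal_exp_mul_jump_le (a := 2 * η) hmeas hindep hident hb hη.le
        (by linarith)
    _ ≤ 1 + ENNReal.ofReal A * ENNReal.ofReal φ₂ := by rw [hmoment]; gcongr
    _ = ENNReal.ofReal (1 + A * φ₂) := by
        rw [ENNReal.ofReal_add zero_le_one (by positivity), ENNReal.ofReal_one,
          ENNReal.ofReal_mul (by positivity)]
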